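/- arXiv:2605.31416 — 6 statements merged into one kernel-verified Lean document; each statement's English description precedes it below -/
import Mathlib

section
/- Let d ∈ (0, 1/2) and for θ ∈ (-π, π] with θ ≠ 0 define r_d(θ) := |1 - e^{iθ}|^{2d+2} · ∑_{k∈ℤ} |θ + 2πk|^{-(2d+2)}, with r_d(0) := 1. Then 0 < r_d(θ) < 1 for all θ ≠ 0. -/
/-!
Put `x = θ / (2π)`. The summands of `r_d(θ)` are `w k ^ (1 + d)` with
`w k = (sin (π x) / (π (x + k)))²`, all positive. Of the classical identity `∑ k, w k = 1` only
`≤` is needed: iterating `1 / sin² (2u) = (1 / sin² u + 1 / cos² u) / 4` writes `1 / sin² (π x)`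
as a sum of `2 ^ m` terms, and by `|sin t| ≤ |t|` and the `π`-periodicity of `sin²` each
`1 / (π (x + n))²` is dominated by the term of index `n mod 2 ^ m`; these indices are distinct on a
finite set of `n` once `2 ^ m` exceeds twice every `|n|`. Since at least two weights are positive,
each is `< 1`, and `t ^ (1 + d) < t` on `(0, 1)` gives `∑ w k ^ (1 + d) < 1`.
-/

open Real Complex
open Finset

lemma sin_pi_mul_ne_zero_of_forall_ne_int {x : ℝ} (hx : ∀ n : ℤ, x ≠ n) :
    Real.sin (π * x) ≠ 0 := by
  rw [Ne, Real.sin_eq_zero_iff]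
  rintro ⟨n, hn⟩
  exact hx n (mul_left_cancel₀ pi_ne_zero (by linarith))

lemma forall_ne_int_add_div_two_pow {x : ℝ} (hx : ∀ n : ℤ, x ≠ n) (k : ℤ) (m : ℕ) (n : ℤ) :
    (x + k) / 2 ^ m ≠ n := by
  intro h
  apply hx (n * 2 ^ m - k)
  push_cast
  rw [div_eq_iff (by positivity)] at h
  linarith

lemma sin_sq_add_int_mul_pi (t : ℝ) (n : ℤ) : Real.sin (t + n * π) ^ 2 = Real.sin t ^ 2 := by
  rw [Real.sin_add_int_mul_pi, mul_pow, ← zpow_natCast ((-1 : ℝ) ^ n), ← zpow_mul, mul_comm n,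
    zpow_mul]
  norm_num

lemma inv_sin_sq_two_mul {u : ℝ} (h : Real.sin (2 * u) ≠ 0) :
    (Real.sin (2 * u) ^ 2)⁻¹ = ((Real.sin u ^ 2)⁻¹ + (Real.cos u ^ 2)⁻¹) / 4 := by
  rw [Real.sin_two_mul] at h ⊢
  have hs : Real.sin u ≠ 0 := by rintro hs; simp [hs] at h
  have hc : Real.cos u ≠ 0 := by rintro hc; simp [hc] at h
  field_simp
  linear_combination (-4) * Real.sin_sq_add_cos_sq u

lemma inv_sq_le_inv_sin_sq {t : ℝ} (ht : Real.sin t ≠ 0) : (t ^ 2)⁻¹ ≤ (Real.sin t ^ 2)⁻¹ :=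
  inv_anti₀ (by positivity) Real.sin_sq_le_sq

theorem inv_sin_sq_eq_sum_range {x : ℝ} (hx : ∀ n : ℤ, x ≠ n) (m : ℕ) :
    (Real.sin (π * x) ^ 2)⁻¹ =
      ∑ j ∈ range (2 ^ m), (4 ^ m)⁻¹ * (Real.sin (π * ((x + j) / 2 ^ m)) ^ 2)⁻¹ := by
  induction m with
  | zero => simp
  | succ m ih =>
    rw [ih, pow_succ, mul_two, sum_range_add, ← sum_add_distrib]
    refine sum_congr rfl fun j _ => ?_
    set u := π * ((x + j) / 2 ^ (m + 1))
    have h2u : π * ((x + j) / 2 ^ m) = 2 * u := by simp only [u, pow_succ]; field_simp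
    have hcos : Real.sin (π * ((x + ((2 ^ m + j : ℕ) : ℝ)) / 2 ^ (m + 1))) = Real.cos u := by
      rw [← Real.sin_add_pi_div_two]; congr 1; simp only [u, pow_succ]; push_cast; field_simp; ring
    have hsin : Real.sin (2 * u) ≠ 0 := by
      rw [← h2u]
      exact sin_pi_mul_ne_zero_of_forall_ne_int (forall_ne_int_add_div_two_pow hx j m)
    rw [h2u, inv_sin_sq_two_mul hsin, hcos, pow_succ 4]
    ring

lemma inv_sq_le_inv_sin_sq_emod {x : ℝ} (hx : ∀ n : ℤ, x ≠ n) (m : ℕ) (n : ℤ) :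
    ((π * (x + n)) ^ 2)⁻¹ ≤
      (4 ^ m)⁻¹ * (Real.sin (π * ((x + (n % 2 ^ m : ℤ)) / 2 ^ m)) ^ 2)⁻¹ := by
  have hsin := sin_pi_mul_ne_zero_of_forall_ne_int (forall_ne_int_add_div_two_pow hx n m)
  have hshift : π * ((x + n) / 2 ^ m) =
      π * ((x + (n % 2 ^ m : ℤ)) / 2 ^ m) + (n / 2 ^ m : ℤ) * π := by
    have hn : (n : ℝ) = (n % 2 ^ m : ℤ) + 2 ^ m * (n / 2 ^ m : ℤ) := by
      exact_mod_cast (Int.emod_add_mul_ediv n (2 ^ m)).symm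
    rw [hn]
    field_simp
    ring
  calc ((π * (x + n)) ^ 2)⁻¹ = (4 ^ m)⁻¹ * ((π * ((x + n) / 2 ^ m)) ^ 2)⁻¹ := by
        rw [show (4 : ℝ) ^ m = (2 ^ m) ^ 2 by rw [← pow_mul, mul_comm, pow_mul]; norm_num]
        field_simp
    _ ≤ (4 ^ m)⁻¹ * (Real.sin (π * ((x + n) / 2 ^ m)) ^ 2)⁻¹ :=
        mul_le_mul_of_nonneg_left (inv_sq_le_inv_sin_sq hsin) (by positivity)
    _ = (4 ^ m)⁻¹ * (Real.sin (π * ((x + (n % 2 ^ m : ℤ)) / 2 ^ m)) ^ 2)⁻¹ := by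
        rw [hshift, sin_sq_add_int_mul_pi]

theorem sum_inv_sq_le_inv_sin_sq {x : ℝ} (hx : ∀ n : ℤ, x ≠ n) (S : Finset ℤ) :
    ∑ n ∈ S, ((π * (x + n)) ^ 2)⁻¹ ≤ (Real.sin (π * x) ^ 2)⁻¹ := by
  set B := S.sup Int.natAbs
  set M : ℤ := 2 ^ (B + 1)
  set g : ℕ → ℝ := fun j ↦ (4 ^ (B + 1))⁻¹ * (Real.sin (π * ((x + j) / 2 ^ (B + 1))) ^ 2)⁻¹
  have hM : M.natAbs = 2 ^ B + 2 ^ B := by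
    simp only [M]; rw [Int.natAbs_pow]; norm_num [pow_succ, mul_two]
  have hS : ∀ n ∈ S, n.natAbs < 2 ^ B := fun n hn ↦
    (Finset.le_sup (f := Int.natAbs) hn).trans_lt Nat.lt_two_pow_self
  have hinj : Set.InjOn (fun n : ℤ ↦ (n % M).toNat) S := by
    intro a ha b hb hab
    have hmod : a % M = b % M := by
      have ha_nonneg := Int.emod_nonneg a (by positivity : M ≠ 0)
      have hb_nonneg := Int.emod_nonneg b (by positivity : M ≠ 0)
      simp only at hab; omega
    have hsub := Int.eq_zero_of_dvd_of_natAbs_lt_natAbs (Int.ModEq.dvd hmod)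
      (by have := hS a ha; have := hS b hb; omega)
    omega
  calc ∑ n ∈ S, ((π * (x + n)) ^ 2)⁻¹ ≤ ∑ n ∈ S, g (n % M).toNat := by
        refine sum_le_sum fun n _ ↦ ?_
        have hnn : 0 ≤ n % M := Int.emod_nonneg n (by positivity)
        have hcast : ((n % M).toNat : ℝ) = ((n % M : ℤ) : ℝ) := by
          exact_mod_cast Int.toNat_of_nonneg hnn
        simp only [g]
        rw [hcast]
        exact inv_sq_le_inv_sin_sq_emod hx (B + 1) n
    _ = ∑ j ∈ S.image (fun n ↦ (n % M).toNat), g j := (sum_image hinj).symm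
    _ ≤ ∑ j ∈ range (2 ^ (B + 1)), g j := by
        refine sum_le_sum_of_subset_of_nonneg ?_ fun j _ _ ↦ by positivity
        intro j hj
        obtain ⟨n, -, rfl⟩ := mem_image.mp hj
        have hlt := Int.emod_lt_of_pos n (by positivity : 0 < M)
        have hnn := Int.emod_nonneg n (by positivity : M ≠ 0)
        rw [mem_range]; push_cast [M] at hlt ⊢; omega
    _ = (Real.sin (π * x) ^ 2)⁻¹ := (inv_sin_sq_eq_sum_range hx (B + 1)).symm

section RpowTsum

variable {ι : Type*} {a : ι → ℝ} {p : ℝ}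

lemma rpow_le_self_of_tsum_le_one (ha : ∀ k, 0 ≤ a k) (hs : Summable a) (h1 : ∑' k, a k ≤ 1)
    (hp : 1 ≤ p) (k : ι) : a k ^ p ≤ a k :=
  rpow_le_self_of_le_one (ha k) ((hs.le_tsum k fun k _ ↦ ha k).trans h1) hp

lemma summable_rpow_of_tsum_le_one (ha : ∀ k, 0 ≤ a k) (hs : Summable a) (h1 : ∑' k, a k ≤ 1)
    (hp : 1 ≤ p) : Summable fun k ↦ a k ^ p :=
  hs.of_nonneg_of_le (fun k ↦ rpow_nonneg (ha k) p) (rpow_le_self_of_tsum_le_one ha hs h1 hp)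

theorem tsum_rpow_lt_one_of_tsum_le_one (ha : ∀ k, 0 ≤ a k) (hs : Summable a)
    (h1 : ∑' k, a k ≤ 1) (hp : 1 < p) {i j : ι} (hij : i ≠ j) (hi : 0 < a i) (hj : 0 < a j) :
    ∑' k, a k ^ p < 1 := by
  classical
  have hi_lt_one : a i < 1 := by
    have := hs.sum_le_tsum {i, j} fun k _ ↦ ha k
    rw [sum_pair hij] at this
    linarith
  calc ∑' k, a k ^ p < ∑' k, a k :=
        (summable_rpow_of_tsum_le_one ha hs h1 hp.le).tsum_lt_tsum
          (rpow_le_self_of_tsum_le_one ha hs h1 hp.le) (rpow_lt_self_of_lt_one hi hi_lt_one hp) hs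
    _ ≤ 1 := h1

end RpowTsum

/-- Equal to `Real.sinc (π * (x + k)) ^ 2` by the `π`-periodicity of `sin²`. -/
noncomputable def sincSqWeight (x : ℝ) (k : ℤ) : ℝ := (Real.sin (π * x) / (π * (x + k))) ^ 2

lemma sincSqWeight_pos {x : ℝ} (hx : ∀ n : ℤ, x ≠ n) (k : ℤ) : 0 < sincSqWeight x k := by
  have hxk : π * (x + k) ≠ 0 :=
    mul_ne_zero pi_ne_zero fun h ↦ hx (-k) (by push_cast; linarith)
  exact sq_pos_of_ne_zero (div_ne_zero (sin_pi_mul_ne_zero_of_forall_ne_int hx) hxk)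

lemma sum_sincSqWeight_le_one {x : ℝ} (hx : ∀ n : ℤ, x ≠ n) (S : Finset ℤ) :
    ∑ k ∈ S, sincSqWeight x k ≤ 1 := by
  have hsin := sin_pi_mul_ne_zero_of_forall_ne_int hx
  calc ∑ k ∈ S, sincSqWeight x k
      = Real.sin (π * x) ^ 2 * ∑ k ∈ S, ((π * (x + k)) ^ 2)⁻¹ := by
        rw [mul_sum]
        exact sum_congr rfl fun k _ ↦ by rw [sincSqWeight, div_pow, div_eq_mul_inv]
    _ ≤ Real.sin (π * x) ^ 2 * (Real.sin (π * x) ^ 2)⁻¹ := by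
        gcongr; exact sum_inv_sq_le_inv_sin_sq hx S
    _ = 1 := mul_inv_cancel₀ (pow_ne_zero 2 hsin)

lemma abs_rpow_two_mul_mul_abs_rpow_neg (u v p : ℝ) :
    |u| ^ (2 * p) * |v| ^ (-(2 * p)) = ((u / v) ^ 2) ^ p := by
  rw [rpow_neg (abs_nonneg v), ← div_eq_mul_inv, ← div_rpow (abs_nonneg u) (abs_nonneg v),
    ← abs_div, rpow_mul (abs_nonneg _), rpow_two, sq_abs]

lemma forall_ne_int_div_two_pi {θ : ℝ} (hθ : θ ∈ Set.Ioc (-π) π) (hθ0 : θ ≠ 0) :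
    ∀ n : ℤ, θ / (2 * π) ≠ n := by
  intro n h
  rw [div_eq_iff (by positivity)] at h
  obtain ⟨hlo, hhi⟩ := hθ
  rcases lt_trichotomy n 0 with hn | rfl | hn
  · have : (n : ℝ) ≤ -1 := by exact_mod_cast Int.le_sub_one_of_lt hn
    nlinarith [pi_pos]
  · simp [h] at hθ0
  · have : (1 : ℝ) ≤ n := by exact_mod_cast hn
    nlinarith [pi_pos]

lemma norm_one_sub_exp_I_mul_rpow_mul_abs_rpow_neg {θ : ℝ} (p : ℝ) (k : ℤ) :
    ‖1 - Complex.exp (Complex.I * θ)‖ ^ (2 * p) * |θ + 2 * π * k| ^ (-(2 * p)) =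
      sincSqWeight (θ / (2 * π)) k ^ p := by
  rw [norm_sub_rev, norm_exp_I_mul_ofReal_sub_one, Real.norm_eq_abs,
    abs_rpow_two_mul_mul_abs_rpow_neg, sincSqWeight]
  congr 2
  field_simp

theorem rd_lt_one (d : ℝ) (hd : d ∈ Set.Ioo (0 : ℝ) (1/2))
    (r : ℝ → ℝ)
    (hr : ∀ θ : ℝ, θ ≠ 0 →
      r θ = ‖1 - Complex.exp (Complex.I * θ)‖ ^ (2 * d + 2) *
        ∑' k : ℤ, |θ + 2 * π * k| ^ (-(2 * d + 2)))
    (θ : ℝ) (hθ : θ ∈ Set.Ioc (-π) π) (hθ0 : θ ≠ 0) :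
    0 < r θ ∧ r θ < 1 := by
  have hx := forall_ne_int_div_two_pi hθ hθ0
  set a := sincSqWeight (θ / (2 * π))
  have ha : ∀ k, 0 < a k := sincSqWeight_pos hx
  have hs : Summable a := summable_of_sum_le (fun k ↦ (ha k).le) (sum_sincSqWeight_le_one hx)
  have h1 : ∑' k, a k ≤ 1 :=
    Real.tsum_le_of_sum_le (fun k ↦ (ha k).le) (sum_sincSqWeight_le_one hx)
  have hp : 1 < d + 1 := by linarith [hd.1]
  have hr' : r θ = ∑' k, a k ^ (d + 1) := by
    rw [hr θ hθ0, ← tsum_mul_left, show 2 * d + 2 = 2 * (d + 1) by ring]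
    exact tsum_congr fun k ↦ norm_one_sub_exp_I_mul_rpow_mul_abs_rpow_neg (d + 1) k
  rw [hr']
  exact ⟨(summable_rpow_of_tsum_le_one (fun k ↦ (ha k).le) hs h1 hp.le).tsum_pos
      (fun k ↦ rpow_nonneg (ha k).le _) 0 (rpow_pos_of_pos (ha 0) _),
    tsum_rpow_lt_one_of_tsum_le_one (fun k ↦ (ha k).le) hs h1 hp zero_ne_one (ha 0) (ha 1)⟩
end

section
/- Let p > 0, let (u_j)_{j≥0} be a real sequence with ∑_{j≥0} (1+j)^p |u_j| < ∞, and let (b_n)_{n≥0} be a positive, eventually decreasing sequence with b_n ~ K n^{-p} as n → ∞ for some K > 0. Then ∑_{j=0}^{n} u_j b_{n-j} ~ (∑_{j=0}^{∞} u_j) · b_n as n → ∞, provided ∑_{j≥0} u_j ≠ 0; in general, (∑_{j=0}^n u_j b_{n-j})/b_n → ∑_{j=0}^∞ u_j. -/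
/-!
Writing `b n = g n * (1 + n) ^ (-p)`, the hypothesis on `b` says `g n → K > 0`. Hence for each
fixed `j` the ratio `b (n - j) / b n` tends to `1`, while for all `j ≤ n` it is at most
`D * (1 + j) ^ p`, because `g` is bounded above and away from `0` and `1 + n ≤ (1 + j) (1 + n - j)`.
The weights `(1 + j) ^ p * |u j|` are summable, so Tannery's theorem (dominated convergence for
series) lets the limit pass through `∑ j ≤ n, u j * (b (n - j) / b n)`.
-/

open Real Filter Finset Topology

theorem tendsto_sum_range_mul_div_of_dominated {u b w : ℕ → ℝ}
    (hw : Summable fun j => w j * |u j|)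
    (hlim : ∀ j, Tendsto (fun n => b (n - j) / b n) atTop (𝓝 1))
    (hdom : ∀ n j, j ≤ n → |b (n - j) / b n| ≤ w j) :
    Tendsto (fun n => (∑ j ∈ range (n + 1), u j * b (n - j)) / b n) atTop
      (𝓝 (∑' j, u j)) := by
  set f : ℕ → ℕ → ℝ := fun n j => if j ≤ n then u j * (b (n - j) / b n) else 0
  have hf_lim : ∀ j, Tendsto (f · j) atTop (𝓝 (u j)) := fun j => by
    have h := (hlim j).const_mul (u j)
    rw [mul_one] at h
    exact h.congr' ((eventually_ge_atTop j).mono fun n hn => by simp [f, hn])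
  have hf_bound : ∀ n j, ‖f n j‖ ≤ w j * |u j| := by
    intro n j
    by_cases hjn : j ≤ n
    · simp only [f, if_pos hjn, norm_mul, Real.norm_eq_abs, mul_comm (|u j|)]
      exact mul_le_mul_of_nonneg_right (hdom n j hjn) (abs_nonneg _)
    · simp only [f, if_neg hjn, norm_zero]
      exact mul_nonneg ((abs_nonneg _).trans (hdom j j le_rfl)) (abs_nonneg _)
  have hf_sum : ∀ n, ∑' j, f n j = (∑ j ∈ range (n + 1), u j * b (n - j)) / b n := by
    intro n
    rw [tsum_eq_sum (s := range (n + 1)) fun j hj => by simp [f] at hj ⊢; omega, sum_div]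
    refine sum_congr rfl fun j hj => ?_
    simp [f, Nat.lt_succ_iff.mp (mem_range.mp hj), mul_div_assoc]
  simpa only [hf_sum] using
    tendsto_tsum_of_dominated_convergence hw hf_lim (Eventually.of_forall hf_bound)

theorem tendsto_one_add_rpow_mul_of_tendsto_div_rpow {b : ℕ → ℝ} {p K : ℝ} (hK : K ≠ 0)
    (hb : Tendsto (fun n : ℕ => b n / (K * (n : ℝ) ^ (-p))) atTop (𝓝 1)) :
    Tendsto (fun n : ℕ => (1 + n : ℝ) ^ p * b n) atTop (𝓝 K) := by
  have hshift : Tendsto (fun n : ℕ => (1 + 1 / n : ℝ) ^ p) atTop (𝓝 1) := by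
    simpa using (tendsto_const_nhds.add tendsto_one_div_atTop_nhds_zero_nat).rpow_const
      (p := p) (Or.inl (by norm_num : (1 : ℝ) + 0 ≠ 0))
  have h := (hb.mul_const K).mul hshift
  rw [one_mul, mul_one] at h
  refine h.congr' ((eventually_ge_atTop 1).mono fun n hn₁ => ?_)
  have hn : (0 : ℝ) < n := by exact_mod_cast hn₁
  have hsplit : (1 + n : ℝ) ^ p = (n : ℝ) ^ p * (1 + 1 / n) ^ p := by
    rw [← mul_rpow hn.le (by positivity), mul_add, mul_one_div_cancel hn.ne', mul_one, add_comm]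
  simp only [hsplit, rpow_neg hn.le]
  field_simp

theorem exists_forall_div_le_of_tendsto {g : ℕ → ℝ} {K : ℝ} (hg : ∀ n, 0 < g n) (hK : K ≠ 0)
    (h : Tendsto g atTop (𝓝 K)) : ∃ D, ∀ m n, g m / g n ≤ D := by
  obtain ⟨C, hC⟩ := h.bddAbove_range
  obtain ⟨C', hC'⟩ := (h.inv₀ hK).bddAbove_range
  refine ⟨C * C', fun m n => ?_⟩
  rw [div_eq_mul_inv]
  exact mul_le_mul (hC ⟨m, rfl⟩) (hC' ⟨n, rfl⟩) (inv_pos.2 (hg n)).le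
    ((hg m).le.trans (hC ⟨m, rfl⟩))

theorem tendsto_one_add_div_one_add_sub (j : ℕ) :
    Tendsto (fun n : ℕ => (1 + n : ℝ) / (1 + (n - j : ℕ))) atTop (𝓝 1) := by
  have h : Tendsto (fun n : ℕ => 1 + (j : ℝ) / ((n - j + 1 : ℕ) : ℝ)) atTop (𝓝 1) := by
    simpa using tendsto_const_nhds.add ((tendsto_const_div_atTop_nhds_zero_nat (j : ℝ)).comp
      ((tendsto_add_atTop_nat 1).comp (tendsto_sub_atTop_nat j)))
  refine h.congr' ((eventually_ge_atTop j).mono fun n hn => ?_)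
  have hpos : (0 : ℝ) < (n - j + 1 : ℕ) := by positivity
  beta_reduce
  rw [show (1 + ((n - j : ℕ) : ℝ)) = ((n - j + 1 : ℕ) : ℝ) by push_cast; ring,
    eq_div_iff hpos.ne', add_mul, div_mul_cancel₀ _ hpos.ne']
  push_cast [Nat.cast_sub hn]
  ring

theorem div_eq_rpow_mul_div_mul_rpow (b : ℕ → ℝ) (p : ℝ) (m n : ℕ) :
    b m / b n = (1 + m : ℝ) ^ p * b m / ((1 + n : ℝ) ^ p * b n) * ((1 + n : ℝ) / (1 + m)) ^ p := by
  rw [div_rpow (by positivity) (by positivity)]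
  have : (1 + m : ℝ) ^ p ≠ 0 := by positivity
  have : (1 + n : ℝ) ^ p ≠ 0 := by positivity
  rcases eq_or_ne (b n) 0 with hb | hb
  · simp [hb]
  · field_simp

theorem tendsto_sub_div_of_tendsto_one_add_rpow_mul {b : ℕ → ℝ} {p K : ℝ} (hK : K ≠ 0)
    (hg : Tendsto (fun n : ℕ => (1 + n : ℝ) ^ p * b n) atTop (𝓝 K)) (j : ℕ) :
    Tendsto (fun n => b (n - j) / b n) atTop (𝓝 1) := by
  have h := ((hg.comp (tendsto_sub_atTop_nat j)).div hg hK).mul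
    ((tendsto_one_add_div_one_add_sub j).rpow_const (p := p) (Or.inl one_ne_zero))
  rw [div_self hK, one_rpow, mul_one] at h
  simpa only [div_eq_rpow_mul_div_mul_rpow b p (_ - j), Function.comp_def, Pi.div_apply] using h

theorem abs_sub_div_le_of_forall_div_le {b : ℕ → ℝ} {p D : ℝ} (hp : 0 ≤ p)
    (hbpos : ∀ n, 0 < b n)
    (hD : ∀ m n : ℕ, (1 + m : ℝ) ^ p * b m / ((1 + n : ℝ) ^ p * b n) ≤ D) {n j : ℕ}
    (hj : j ≤ n) : |b (n - j) / b n| ≤ D * (1 + j : ℝ) ^ p := by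
  have hD₀ : 0 ≤ D := by
    have h := hD 0 0
    rw [div_self (by have := hbpos 0; positivity)] at h
    linarith
  have hm : (0 : ℝ) < 1 + (n - j : ℕ) := by positivity
  have hratio : (1 + n : ℝ) / (1 + (n - j : ℕ)) ≤ 1 + j := by
    rw [div_le_iff₀ hm]
    push_cast [Nat.cast_sub hj]
    nlinarith [(Nat.cast_le (α := ℝ)).2 hj, (Nat.cast_nonneg (α := ℝ) j)]
  rw [abs_of_pos (div_pos (hbpos _) (hbpos n)), div_eq_rpow_mul_div_mul_rpow b p]
  exact mul_le_mul (hD _ _) (rpow_le_rpow (by positivity) hratio hp) (by positivity) hD₀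

theorem convolution_asymptotics_general (p : ℝ) (hp : 0 < p)
    (u : ℕ → ℝ) (hu : Summable (fun j : ℕ => (1 + j : ℝ) ^ p * |u j|))
    (b : ℕ → ℝ) (hbpos : ∀ n, 0 < b n)
    (K : ℝ) (hK : 0 < K)
    (hb : Tendsto (fun n : ℕ => b n / (K * (n : ℝ) ^ (-p))) atTop (nhds 1)) :
    Tendsto (fun n : ℕ => (∑ j ∈ Finset.range (n + 1), u j * b (n - j)) / b n)
      atTop (nhds (∑' j : ℕ, u j)) := by
  have hg := tendsto_one_add_rpow_mul_of_tendsto_div_rpow hK.ne' hb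
  obtain ⟨D, hD⟩ :=
    exists_forall_div_le_of_tendsto (fun n => mul_pos (by positivity) (hbpos n)) hK.ne' hg
  refine tendsto_sum_range_mul_div_of_dominated (w := fun j => D * (1 + j : ℝ) ^ p) ?_
    (tendsto_sub_div_of_tendsto_one_add_rpow_mul hK.ne' hg)
    (fun n j hj => abs_sub_div_le_of_forall_div_le hp.le hbpos hD hj)
  simpa only [mul_assoc] using hu.mul_left D

theorem convolution_asymptotics (p : ℝ) (hp : 0 < p)
    (u : ℕ → ℝ) (hu : Summable (fun j : ℕ => (1 + j : ℝ) ^ p * |u j|))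
    (b : ℕ → ℝ) (hbpos : ∀ n, 0 < b n)
    (hbdec : ∃ N : ℕ, ∀ m n : ℕ, N ≤ m → m ≤ n → b n ≤ b m)
    (K : ℝ) (hK : 0 < K)
    (hb : Tendsto (fun n : ℕ => b n / (K * (n : ℝ) ^ (-p))) atTop (nhds 1)) :
    Tendsto (fun n : ℕ => (∑ j ∈ Finset.range (n + 1), u j * b (n - j)) / b n)
      atTop (nhds (∑' j : ℕ, u j)) :=
  convolution_asymptotics_general p hp u hu b hbpos K hK hb
end

section
/- Let 0 < α < 1 and let f ∈ C^{2,α}(𝕋) be an even 2π-periodic function with f(0) = 0. Then the integral ∫_{-π}^{π} f(t) csc²(t/2) dt converges absolutely and the derivative of the periodic Hilbert transform of f at the origin satisfies (Hf)'(0) = -(1/4π) ∫_{-π}^{π} f(t) csc²(t/2) dt. -/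
/-!
Evenness gives `f'(0) = 0`, so with `f(0) = 0` and `f'` Lipschitz near `0` we get
`f(t) = O(t²)` and `f'(t) = O(t)`; since `|sin (t/2)| ≥ |t|/π` on `[-π, π]`, both
`f(t) csc²(t/2)` and `f'(t) cot(t/2)` are bounded there. The Lipschitz bound on `f'` also
dominates the `x`-derivative of the integrand of `Hf`, so `(Hf)'(0) = (1/2π) ∫ f'(-t) cot(t/2) dt
= -(1/2π) ∫ f'(t) cot(t/2) dt`. Finally `f(t) cot(t/2)` is continuous on `[-π, π]`, vanishes at
`0` and `±π`, and has derivative `f' cot(t/2) - ½ f csc²(t/2)` off `0`, whence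
`∫ f' cot(t/2) = ½ ∫ f csc²(t/2)`.
-/

open Real MeasureTheory Set Metric
open scoped NNReal

lemma abs_div_pi_le_abs_sin_half {t : ℝ} (ht : |t| ≤ π) : |t| / π ≤ |sin (t / 2)| := by
  have h := mul_abs_le_abs_sin (x := t / 2) (by rw [abs_div, abs_two]; linarith)
  rw [abs_div, abs_two] at h
  calc |t| / π = 2 / π * (|t| / 2) := by field_simp
    _ ≤ |sin (t / 2)| := h

lemma sin_half_ne_zero {t : ℝ} (h0 : t ≠ 0) (ht : |t| ≤ π) : sin (t / 2) ≠ 0 :=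
  abs_pos.mp ((div_pos (abs_pos.mpr h0) pi_pos).trans_le (abs_div_pi_le_abs_sin_half ht))

lemma abs_mul_cot_half_le {a t C : ℝ} (hC : 0 ≤ C) (ht : |t| ≤ π) (ha : |a| ≤ C * |t|) :
    |a * (cos (t / 2) / sin (t / 2))| ≤ C * π := by
  rcases eq_or_ne t 0 with rfl | ht0
  · simpa using mul_nonneg hC pi_pos.le
  have htpos : 0 < |t| := abs_pos.mpr ht0
  rw [abs_mul, abs_div]
  calc |a| * (|cos (t / 2)| / |sin (t / 2)|) ≤ (C * |t|) * (1 / (|t| / π)) := by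
        gcongr
        exacts [abs_cos_le_one _, abs_div_pi_le_abs_sin_half ht]
    _ = C * π := by field_simp

lemma abs_div_sin_half_sq_le {a t C : ℝ} (hC : 0 ≤ C) (ht : |t| ≤ π) (ha : |a| ≤ C * t ^ 2) :
    |a / sin (t / 2) ^ 2| ≤ C * π ^ 2 := by
  rcases eq_or_ne t 0 with rfl | ht0
  · simpa using mul_nonneg hC (sq_nonneg π)
  have htpos : 0 < |t| := abs_pos.mpr ht0
  rw [← sq_abs t] at ha
  rw [abs_div, abs_pow]
  calc |a| / |sin (t / 2)| ^ 2 ≤ C * |t| ^ 2 / (|t| / π) ^ 2 := by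
        gcongr
        exact abs_div_pi_le_abs_sin_half ht
    _ = C * π ^ 2 := by field_simp

lemma intervalIntegrable_of_abs_le {g : ℝ → ℝ} {a b C : ℝ} (hg : Measurable g)
    (hb : ∀ t ∈ uIoc a b, |g t| ≤ C) : IntervalIntegrable g volume a b :=
  (intervalIntegrable_const (c := C)).mono_fun hg.aestronglyMeasurable
    ((ae_restrict_iff' measurableSet_uIoc).mpr (.of_forall fun t ht => by
      simpa [Real.norm_eq_abs] using (hb t ht).trans (le_abs_self C)))

lemma abs_le_pi_of_mem_uIoc {t : ℝ} (ht : t ∈ uIoc (-π) π) : |t| ≤ π := by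
  rw [uIoc_of_le (by linarith [pi_pos])] at ht
  exact abs_le.mpr ⟨ht.1.le, ht.2⟩

lemma intervalIntegrable_mul_cot_half {g : ℝ → ℝ} {C : ℝ} (hg : Measurable g) (hC : 0 ≤ C)
    (hb : ∀ t, |t| ≤ π → |g t| ≤ C * |t|) :
    IntervalIntegrable (fun t => g t * (cos (t / 2) / sin (t / 2))) volume (-π) π :=
  intervalIntegrable_of_abs_le (C := C * π) (by fun_prop) fun t ht =>
    abs_mul_cot_half_le hC (abs_le_pi_of_mem_uIoc ht) (hb t (abs_le_pi_of_mem_uIoc ht))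

lemma intervalIntegrable_div_sin_half_sq {g : ℝ → ℝ} {C : ℝ} (hg : Measurable g) (hC : 0 ≤ C)
    (hb : ∀ t, |t| ≤ π → |g t| ≤ C * t ^ 2) :
    IntervalIntegrable (fun t => g t / sin (t / 2) ^ 2) volume (-π) π :=
  intervalIntegrable_of_abs_le (C := C * π ^ 2) (by fun_prop) fun t ht =>
    abs_div_sin_half_sq_le hC (abs_le_pi_of_mem_uIoc ht) (hb t (abs_le_pi_of_mem_uIoc ht))

lemma deriv_zero_of_even {f : ℝ → ℝ} (heven : ∀ x, f (-x) = f x) : deriv f 0 = 0 := by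
  have h := deriv_comp_neg (f := f) (x := 0)
  simp only [heven, neg_zero] at h
  linarith

lemma abs_deriv_le_of_lipschitzOnWith {f : ℝ → ℝ} {K : ℝ≥0} {R : ℝ}
    (hlip : LipschitzOnWith K (deriv f) (closedBall 0 R)) (h0 : deriv f 0 = 0) {t : ℝ}
    (ht : |t| ≤ R) : |deriv f t| ≤ K * |t| := by
  have hR : 0 ≤ R := (abs_nonneg t).trans ht
  simpa [h0, Real.dist_eq] using
    hlip.dist_le_mul t (by simpa using ht) 0 (mem_closedBall_self hR)

lemma abs_le_mul_sq_of_lipschitzOnWith_deriv {f : ℝ → ℝ} {K : ℝ≥0} {R : ℝ} (hf : Differentiable ℝ f)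
    (hlip : LipschitzOnWith K (deriv f) (closedBall 0 R)) (hf0 : f 0 = 0) (h0 : deriv f 0 = 0)
    {t : ℝ} (ht : |t| ≤ R) : |f t| ≤ K * t ^ 2 := by
  have hderiv : ∀ s ∈ uIcc 0 t, ‖deriv f s‖ ≤ K * |t| := fun s hs => by
    have hst : |s| ≤ |t| := by simpa using abs_sub_left_of_mem_uIcc hs
    calc ‖deriv f s‖ ≤ K * |s| := abs_deriv_le_of_lipschitzOnWith hlip h0 (hst.trans ht)
      _ ≤ K * |t| := by gcongr
  have h := (convex_uIcc 0 t).norm_image_sub_le_of_norm_deriv_le (fun s _ => hf s) hderiv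
    left_mem_uIcc right_mem_uIcc
  simpa [hf0, Real.norm_eq_abs, mul_assoc, ← sq] using h

lemma hasDerivAt_mul_cot_half {f : ℝ → ℝ} {f' t : ℝ} (hf : HasDerivAt f f' t)
    (ht : sin (t / 2) ≠ 0) :
    HasDerivAt (fun s => f s * (cos (s / 2) / sin (s / 2)))
      (f' * (cos (t / 2) / sin (t / 2)) - (1 / 2) * (f t / sin (t / 2) ^ 2)) t := by
  have hcos := (hasDerivAt_cos (t / 2)).comp t ((hasDerivAt_id t).div_const 2)
  have hsin := (hasDerivAt_sin (t / 2)).comp t ((hasDerivAt_id t).div_const 2)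
  refine (hf.mul (hcos.div hsin ht)).congr_deriv ?_
  simp only [Pi.div_apply, Function.comp_apply, id]
  field_simp
  linear_combination (-f t) * sin_sq_add_cos_sq (t / 2)

lemma continuousOn_mul_cot_half {f : ℝ → ℝ} {C : ℝ} (hf : Continuous f) (hC : 0 ≤ C)
    (hb : ∀ t, |t| ≤ π → |f t| ≤ C * t ^ 2) :
    ContinuousOn (fun t => f t * (cos (t / 2) / sin (t / 2))) (Icc (-π) π) := by
  intro t ht
  refine ContinuousAt.continuousWithinAt ?_
  rcases eq_or_ne t 0 with rfl | ht0
  · -- the value at `0` is `0` (division by `sin 0 = 0`), and nearby the function is `O(|t|)`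
    have hsmall : ∀ s, |s| ≤ π → ‖f s * (cos (s / 2) / sin (s / 2))‖ ≤ C * π * |s| := fun s hs =>
      (abs_mul_cot_half_le (mul_nonneg hC (abs_nonneg s)) hs
        (by rw [mul_assoc, ← sq, sq_abs]; exact hb s hs)).trans_eq (by ring)
    have : Filter.Tendsto (fun s : ℝ => C * π * |s|) (nhds 0) (nhds 0) := by
      simpa using (continuous_abs.const_mul (C * π)).tendsto (0 : ℝ)
    simpa [ContinuousAt] using squeeze_zero_norm' (Filter.eventually_of_mem
      (closedBall_mem_nhds (0 : ℝ) pi_pos) fun s hs => hsmall s (by simpa using hs)) this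
  · have hsin := sin_half_ne_zero ht0 (abs_le.mpr ⟨ht.1, ht.2⟩)
    fun_prop (disch := exact hsin)

lemma integral_deriv_mul_cot_half {f : ℝ → ℝ} {C : ℝ} (hf : Differentiable ℝ f) (hC : 0 ≤ C)
    (hb : ∀ t, |t| ≤ π → |f t| ≤ C * t ^ 2)
    (hint : IntervalIntegrable (fun t => deriv f t * (cos (t / 2) / sin (t / 2))) volume (-π) π) :
    ∫ t in -π..π, deriv f t * (cos (t / 2) / sin (t / 2)) =
      (1 / 2) * ∫ t in -π..π, f t / sin (t / 2) ^ 2 := by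
  have hint' := intervalIntegrable_div_sin_half_sq hf.continuous.measurable hC hb
  have hFTC := integral_eq_of_hasDerivAt_off_countable_of_le
    (fun t => f t * (cos (t / 2) / sin (t / 2))) _ (by linarith [pi_pos]) (countable_singleton 0)
    (continuousOn_mul_cot_half hf.continuous hC hb)
    (fun t ht => hasDerivAt_mul_cot_half (hf t).hasDerivAt
      (sin_half_ne_zero ht.2 (abs_le.mpr ⟨ht.1.1.le, ht.1.2.le⟩)))
    (hint.sub (hint'.const_mul (1 / 2)))
  rw [intervalIntegral.integral_sub hint (hint'.const_mul _),
    intervalIntegral.integral_const_mul] at hFTC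
  have hcos : cos (-π / 2) = 0 := by rw [neg_div, cos_neg, cos_pi_div_two]
  simp only [cos_pi_div_two, hcos, zero_div, mul_zero, sub_zero] at hFTC
  exact sub_eq_zero.mp hFTC

lemma integral_comp_neg_mul_cot_half (g : ℝ → ℝ) :
    ∫ t in -π..π, g (-t) * (cos (t / 2) / sin (t / 2)) =
      -∫ t in -π..π, g t * (cos (t / 2) / sin (t / 2)) := by
  have h := intervalIntegral.integral_comp_neg (a := -π) (b := π)
    fun t => g t * (cos (t / 2) / sin (t / 2))
  simp only [neg_neg, neg_div, cos_neg, sin_neg, div_neg, mul_neg,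
    intervalIntegral.integral_neg] at h
  linarith

lemma hasDerivAt_integral_sub_mul_cot_half {f : ℝ → ℝ} {K : ℝ≥0} {x₀ : ℝ}
    (hf : Differentiable ℝ f) (hlip : LipschitzOnWith K (deriv f) (closedBall x₀ (π + 1)))
    (hint : IntervalIntegrable (fun t => (f (x₀ - t) - f x₀) * (cos (t / 2) / sin (t / 2)))
      volume (-π) π) :
    HasDerivAt (fun x => ∫ t in -π..π, (f (x - t) - f x) * (cos (t / 2) / sin (t / 2)))
      (∫ t in -π..π, (deriv f (x₀ - t) - deriv f x₀) * (cos (t / 2) / sin (t / 2))) x₀ := by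
  have hbound : ∀ t, |t| ≤ π → ∀ x ∈ ball x₀ 1,
      ‖(deriv f (x - t) - deriv f x) * (cos (t / 2) / sin (t / 2))‖ ≤ K * π := by
    intro t ht x hx
    rw [mem_ball, Real.dist_eq] at hx
    have hx' : x ∈ closedBall x₀ (π + 1) := by
      rw [mem_closedBall, Real.dist_eq]; linarith [pi_pos]
    have hxt : x - t ∈ closedBall x₀ (π + 1) := by
      rw [mem_closedBall, Real.dist_eq, sub_right_comm]
      linarith [abs_sub (x - x₀) t]
    refine abs_mul_cot_half_le K.2 ht ?_
    simpa [Real.dist_eq] using hlip.dist_le_mul _ hxt _ hx'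
  have hcot : Measurable fun t : ℝ => cos (t / 2) / sin (t / 2) := by fun_prop
  exact (intervalIntegral.hasDerivAt_integral_of_dominated_loc_of_deriv_le
    (F := fun x t => (f (x - t) - f x) * (cos (t / 2) / sin (t / 2)))
    (F' := fun x t => (deriv f (x - t) - deriv f x) * (cos (t / 2) / sin (t / 2)))
    (bound := fun _ => (K : ℝ) * π) (ball_mem_nhds x₀ one_pos)
    (.of_forall fun x => (((hf.continuous.measurable.comp
      (measurable_const.sub measurable_id)).sub_const _).mul hcot).aestronglyMeasurable) hint
    ((((measurable_deriv f).comp (measurable_const.sub measurable_id)).sub_const _).mul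
      hcot).aestronglyMeasurable
    (.of_forall fun t ht x hx => hbound t (abs_le_pi_of_mem_uIoc ht) x hx)
    intervalIntegrable_const
    (.of_forall fun t _ x _ => (((hf (x - t)).hasDerivAt.comp_sub_const x t).sub
      (hf x).hasDerivAt).mul_const _)).2

theorem hilbert_derivative_at_origin_general
    (f : ℝ → ℝ)
    (heven : ∀ x, f (-x) = f x)
    (hf0 : f 0 = 0)
    (hC2 : ContDiff ℝ 2 f)
    (Hf : ℝ → ℝ)
    (hHf : ∀ x, Hf x = (1 / (2 * π)) *
        ∫ t in (-π : ℝ)..π, (f (x - t) - f x) * (Real.cos (t / 2) / Real.sin (t / 2))) :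
    MeasureTheory.IntegrableOn (fun t => f t / Real.sin (t / 2) ^ 2) (Set.Ioc (-π) π) ∧
    deriv Hf 0 = -(1 / (4 * π)) * ∫ t in (-π : ℝ)..π, f t / Real.sin (t / 2) ^ 2 := by
  have hf : Differentiable ℝ f := hC2.differentiable two_ne_zero
  have hf'0 : deriv f 0 = 0 := deriv_zero_of_even heven
  obtain ⟨K, hlip⟩ : ∃ K, LipschitzOnWith K (deriv f) (closedBall 0 (π + 1)) :=
    (hC2.iterate_deriv' 1 1).locallyLipschitz.locallyLipschitzOn.exists_lipschitzOnWith_of_compact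
      (isCompact_closedBall 0 _)
  have hπ : π ≤ π + 1 := by linarith
  have hquad : ∀ t, |t| ≤ π → |f t| ≤ K * t ^ 2 := fun t ht =>
    abs_le_mul_sq_of_lipschitzOnWith_deriv hf hlip hf0 hf'0 (ht.trans hπ)
  have hlin : ∀ t, |t| ≤ π → |deriv f t| ≤ K * |t| := fun t ht =>
    abs_deriv_le_of_lipschitzOnWith hlip hf'0 (ht.trans hπ)
  have hint0 : IntervalIntegrable (fun t => (f (0 - t) - f 0) * (cos (t / 2) / sin (t / 2)))
      volume (-π) π := by
    refine intervalIntegrable_mul_cot_half (C := K * π)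
      ((hf.continuous.measurable.comp (measurable_const.sub measurable_id)).sub_const _)
      (by positivity) fun t ht => ?_
    rw [zero_sub, hf0, sub_zero]
    calc |f (-t)| ≤ K * |t| * |t| := by
          simpa [mul_assoc, ← sq] using hquad (-t) (by rwa [abs_neg])
      _ ≤ K * π * |t| := by gcongr
  refine ⟨(intervalIntegrable_iff_integrableOn_Ioc_of_le (by linarith [pi_pos])).mp
    (intervalIntegrable_div_sin_half_sq hf.continuous.measurable K.2 hquad), ?_⟩
  have hderiv := (hasDerivAt_integral_sub_mul_cot_half hf hlip hint0).const_mul (1 / (2 * π))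
  rw [show Hf = _ from funext hHf, hderiv.deriv]
  simp only [zero_sub, hf'0, sub_zero]
  rw [integral_comp_neg_mul_cot_half, integral_deriv_mul_cot_half hf K.2 hquad
    (intervalIntegrable_mul_cot_half (measurable_deriv f) K.2 hlin)]
  ring

theorem hilbert_derivative_at_origin (α : ℝ) (hα : α ∈ Set.Ioo (0 : ℝ) 1)
    (f : ℝ → ℝ) (M : ℝ)
    (hper : Function.Periodic f (2 * π))
    (heven : ∀ x, f (-x) = f x)
    (hf0 : f 0 = 0)
    (hC2 : ContDiff ℝ 2 f)
    (hHol : ∀ x y, |iteratedDeriv 2 f x - iteratedDeriv 2 f y| ≤ M * |x - y| ^ α)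
    (Hf : ℝ → ℝ)
    (hHf : ∀ x, Hf x = (1 / (2 * π)) *
        ∫ t in (-π : ℝ)..π, (f (x - t) - f x) * (Real.cos (t / 2) / Real.sin (t / 2))) :
    MeasureTheory.IntegrableOn (fun t => f t / Real.sin (t / 2) ^ 2) (Set.Ioc (-π) π) ∧
    deriv Hf 0 = -(1 / (4 * π)) * ∫ t in (-π : ℝ)..π, f t / Real.sin (t / 2) ^ 2 :=
  hilbert_derivative_at_origin_general f heven hf0 hC2 Hf hHf
end

section
/- Let B ∈ ℝ, ε > 0, d ∈ (0,1/2), and let Δ_m = B/(m-d)² + r_m with |r_m| ≤ C m^{-2-ε}. Define the Hankel operators G_n on ℓ²(ℕ) by (G_n)_{ij} = Δ_{n+1+i+j}, and embed into L²(ℝ_+) via the step-function isometry E_n at mesh 1/n. Then n·E_n G_n E_n^{-1} (extended by 0) converges in Hilbert–Schmidt norm to the integral operator R on L²(ℝ_+) with kernel B/(1+x+y)². -/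
open Real Filter MeasureTheory Set Topology

/-!
Write `m = n + 1 + ⌊n x⌋ + ⌊n y⌋`, so that `m / n → 1 + x + y`, and
`n² Δ_m = B (n / (m - d))² + n² r_m` with `|n² r_m| ≤ C (n / m)² m^{-ε}`. Hence the step kernel
converges pointwise to `B / (1 + x + y)²`, and since `m - d ≥ n (1 + x + y) / 2` it is dominated
uniformly in `n` by a multiple of `(1 + x + y)⁻²`, whose square is integrable on the quadrant.
Dominated convergence concludes.
-/

theorem integrableOn_Ioi_inv_one_add_sq :
    IntegrableOn (fun x : ℝ => ((1 + x) ^ 2)⁻¹) (Ioi 0) := by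
  refine integrable_inv_one_add_sq.integrableOn.mono' (by fun_prop) ?_
  filter_upwards [ae_restrict_mem measurableSet_Ioi] with x (hx : 0 < x)
  rw [norm_inv, norm_pow, Real.norm_of_nonneg (by linarith)]
  gcongr
  nlinarith

theorem div_one_add_add_sq_sq_le (A : ℝ) {x y : ℝ} (hx : 0 ≤ x) (hy : 0 ≤ y) :
    (A / (1 + x + y) ^ 2) ^ 2 ≤ A ^ 2 * (((1 + x) ^ 2)⁻¹ * ((1 + y) ^ 2)⁻¹) := by
  rw [div_pow, ← mul_inv, div_eq_mul_inv]
  gcongr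
  have : (1 + x) * (1 + y) ≤ (1 + x + y) ^ 2 := by nlinarith
  calc (1 + x) ^ 2 * (1 + y) ^ 2 = ((1 + x) * (1 + y)) ^ 2 := by ring
    _ ≤ ((1 + x + y) ^ 2) ^ 2 := by gcongr

theorem tendsto_integral_Ioi_Ioi_sq_of_abs_le {F : ℕ → ℝ → ℝ → ℝ} {A : ℝ}
    (hF : ∀ n, Measurable fun p : ℝ × ℝ => F n p.1 p.2)
    (hbound : ∀ n x y, 0 < x → 0 < y → |F n x y| ≤ A / (1 + x + y) ^ 2)
    (hlim : ∀ x y, 0 < x → 0 < y → Tendsto (fun n => F n x y) atTop (𝓝 0)) :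
    Tendsto (fun n => ∫ x in Ioi 0, ∫ y in Ioi 0, F n x y ^ 2) atTop (𝓝 0) := by
  set μ := (volume.restrict (Ioi (0 : ℝ))).prod (volume.restrict (Ioi (0 : ℝ))) with hμ
  have hpos : ∀ᵐ p ∂μ, p ∈ Ioi (0 : ℝ) ×ˢ Ioi (0 : ℝ) := by
    rw [hμ, Measure.prod_restrict]
    exact ae_restrict_mem (measurableSet_Ioi.prod measurableSet_Ioi)
  set g : ℝ × ℝ → ℝ := fun p => A ^ 2 * (((1 + p.1) ^ 2)⁻¹ * ((1 + p.2) ^ 2)⁻¹)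
  have hg : Integrable g μ :=
    (integrableOn_Ioi_inv_one_add_sq.mul_prod integrableOn_Ioi_inv_one_add_sq).const_mul _
  have hmeas : ∀ n, AEStronglyMeasurable (fun p : ℝ × ℝ => F n p.1 p.2 ^ 2) μ :=
    fun n => ((hF n).pow_const 2).aestronglyMeasurable
  have hFg : ∀ n, ∀ᵐ p ∂μ, ‖F n p.1 p.2 ^ 2‖ ≤ g p := fun n => by
    filter_upwards [hpos] with p ⟨hx, hy⟩
    calc ‖F n p.1 p.2 ^ 2‖ = |F n p.1 p.2| ^ 2 := by rw [Real.norm_eq_abs, abs_pow]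
      _ ≤ (A / (1 + p.1 + p.2) ^ 2) ^ 2 := by gcongr; exact hbound n _ _ hx hy
      _ ≤ g p := div_one_add_add_sq_sq_le A hx.le hy.le
  have hDCT := tendsto_integral_of_dominated_convergence g hmeas hg hFg <| by
    filter_upwards [hpos] with p ⟨hx, hy⟩
    simpa using (hlim _ _ hx hy).pow 2
  rw [integral_zero] at hDCT
  exact hDCT.congr fun n => integral_prod _ (hg.mono' (hmeas n) (hFg n))

/-- `hankelIndex n x y = n + 1 + i + j` when `(x, y)` lies in the square
`[i/n, (i+1)/n) × [j/n, (j+1)/n)`. -/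
noncomputable def hankelIndex (n : ℕ) (x y : ℝ) : ℕ := n + 1 + ⌊(n : ℝ) * x⌋₊ + ⌊(n : ℝ) * y⌋₊

/-- The integral kernel of `n E_n G_n E_n⁻¹`. -/
noncomputable def stepKernel (Δ : ℕ → ℝ) (n : ℕ) (x y : ℝ) : ℝ :=
  (n : ℝ) ^ 2 * Δ (hankelIndex n x y)

theorem hankelIndex_cast (n : ℕ) (x y : ℝ) :
    (hankelIndex n x y : ℝ) = n + 1 + ⌊(n : ℝ) * x⌋₊ + ⌊(n : ℝ) * y⌋₊ := by
  simp [hankelIndex]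

theorem succ_le_hankelIndex (n : ℕ) (x y : ℝ) : n + 1 ≤ hankelIndex n x y := by
  unfold hankelIndex
  omega

theorem one_le_hankelIndex (n : ℕ) (x y : ℝ) : 1 ≤ hankelIndex n x y :=
  (Nat.le_add_left 1 n).trans (succ_le_hankelIndex n x y)

theorem mul_sub_one_lt_hankelIndex (n : ℕ) (x y : ℝ) :
    n * (1 + x + y) - 1 < hankelIndex n x y := by
  have hx := Nat.sub_one_lt_floor ((n : ℝ) * x)
  have hy := Nat.sub_one_lt_floor ((n : ℝ) * y)
  rw [hankelIndex_cast]
  linarith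

theorem hankelIndex_le (n : ℕ) {x y : ℝ} (hx : 0 ≤ x) (hy : 0 ≤ y) :
    (hankelIndex n x y : ℝ) ≤ n * (1 + x + y) + 1 := by
  have hx' := Nat.floor_le (mul_nonneg n.cast_nonneg hx)
  have hy' := Nat.floor_le (mul_nonneg n.cast_nonneg hy)
  rw [hankelIndex_cast]
  linarith

theorem mul_div_two_le_hankelIndex_sub {d : ℝ} (hd : d < 1 / 2) (n : ℕ) (x y : ℝ) :
    n * (1 + x + y) / 2 ≤ hankelIndex n x y - d := by
  have hlow := mul_sub_one_lt_hankelIndex n x y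
  have hsucc : (n : ℝ) + 1 ≤ hankelIndex n x y := by exact_mod_cast succ_le_hankelIndex n x y
  rcases le_or_gt 3 (n * (1 + x + y)) with hbig | hsmall
  · linarith
  rcases Nat.eq_zero_or_pos n with rfl | hn
  · simp only [Nat.cast_zero, zero_mul, zero_div]
    linarith
  · have : (1 : ℝ) ≤ n := by exact_mod_cast hn
    linarith

theorem sq_natCast_div_hankelIndex_sub_le {d : ℝ} (hd : d < 1 / 2) (n : ℕ) {x y : ℝ}
    (hs : 0 < 1 + x + y) :
    ((n : ℝ) / (hankelIndex n x y - d)) ^ 2 ≤ 4 / (1 + x + y) ^ 2 := by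
  have hhalf := mul_div_two_le_hankelIndex_sub hd n x y
  have hm : (1 : ℝ) ≤ hankelIndex n x y := by exact_mod_cast one_le_hankelIndex n x y
  have hpos : 0 < (hankelIndex n x y : ℝ) - d := by linarith
  rw [show (4 : ℝ) / (1 + x + y) ^ 2 = (2 / (1 + x + y)) ^ 2 by rw [div_pow]; norm_num]
  refine pow_le_pow_left₀ (div_nonneg n.cast_nonneg hpos.le) ?_ 2
  rw [div_le_div_iff₀ hpos hs]
  linarith

theorem tendsto_hankelIndex_sub_div {x y : ℝ} (hx : 0 ≤ x) (hy : 0 ≤ y) (d : ℝ) :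
    Tendsto (fun n : ℕ => ((hankelIndex n x y : ℝ) - d) / n) atTop (𝓝 (1 + x + y)) := by
  have hlim (c : ℝ) : Tendsto (fun n : ℕ => 1 + x + y + c / n) atTop (𝓝 (1 + x + y)) := by
    simpa using tendsto_const_nhds.add (tendsto_const_div_atTop_nhds_zero_nat c)
  refine tendsto_of_tendsto_of_tendsto_of_le_of_le' (hlim (-1 - d)) (hlim (1 - d)) ?_ ?_
  all_goals
    filter_upwards [eventually_gt_atTop 0] with n hn
    have hn' : (0 : ℝ) < n := by exact_mod_cast hn
    rw [← sub_nonneg]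
    field_simp
  · linarith [mul_sub_one_lt_hankelIndex n x y]
  · linarith [hankelIndex_le n hx hy]

theorem sq_mul_abs_sub_le_rpow {Δ : ℕ → ℝ} {B d C ε : ℝ} {m : ℕ} (hm : 1 ≤ m)
    (hΔ : |Δ m - B / ((m : ℝ) - d) ^ 2| ≤ C * (m : ℝ) ^ (-(2 + ε))) (n : ℕ) :
    (n : ℝ) ^ 2 * |Δ m - B / ((m : ℝ) - d) ^ 2| ≤ C * ((n : ℝ) / m) ^ 2 * (m : ℝ) ^ (-ε) := by
  have hm0 : (0 : ℝ) < m := by exact_mod_cast hm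
  calc (n : ℝ) ^ 2 * |Δ m - B / ((m : ℝ) - d) ^ 2| ≤ (n : ℝ) ^ 2 * (C * (m : ℝ) ^ (-(2 + ε))) := by
        gcongr
    _ = C * ((n : ℝ) / m) ^ 2 * (m : ℝ) ^ (-ε) := by
        rw [neg_add, rpow_add hm0, rpow_neg hm0.le 2, rpow_two, div_pow]
        ring

theorem stepKernel_eq (Δ : ℕ → ℝ) (B d : ℝ) (n : ℕ) (x y : ℝ) :
    stepKernel Δ n x y = (n : ℝ) ^ 2 * (Δ (hankelIndex n x y) - B / (hankelIndex n x y - d) ^ 2)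
      + B * ((n : ℝ) / (hankelIndex n x y - d)) ^ 2 := by
  rw [stepKernel, div_pow]
  ring

theorem measurable_stepKernel (Δ : ℕ → ℝ) (n : ℕ) :
    Measurable fun p : ℝ × ℝ => stepKernel Δ n p.1 p.2 := by
  have hindex : Measurable fun p : ℝ × ℝ => hankelIndex n p.1 p.2 :=
    (measurable_const.add (Nat.measurable_floor.comp (measurable_fst.const_mul _))).add
      (Nat.measurable_floor.comp (measurable_snd.const_mul _))
  exact measurable_const.mul (measurable_from_top.comp hindex)

theorem abs_stepKernel_sub_le {Δ : ℕ → ℝ} {B d C ε : ℝ} (hε : 0 ≤ ε) (hd : d < 1 / 2)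
    (hΔ : ∀ m : ℕ, 1 ≤ m → |Δ m - B / ((m : ℝ) - d) ^ 2| ≤ C * (m : ℝ) ^ (-(2 + ε)))
    (n : ℕ) {x y : ℝ} (hs : 0 < 1 + x + y) :
    |stepKernel Δ n x y - B / (1 + x + y) ^ 2| ≤ (4 * C + 5 * |B|) / (1 + x + y) ^ 2 := by
  set m := hankelIndex n x y
  have hm := one_le_hankelIndex n x y
  have hC : 0 ≤ C := by simpa using (abs_nonneg _).trans (hΔ 1 le_rfl)
  have hrem : (n : ℝ) ^ 2 * |Δ m - B / ((m : ℝ) - d) ^ 2| ≤ C * (4 / (1 + x + y) ^ 2) :=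
    calc (n : ℝ) ^ 2 * |Δ m - B / ((m : ℝ) - d) ^ 2| ≤ C * ((n : ℝ) / m) ^ 2 * (m : ℝ) ^ (-ε) :=
          sq_mul_abs_sub_le_rpow hm (hΔ m hm) n
      _ ≤ C * (4 / (1 + x + y) ^ 2) * 1 := by
          gcongr
          · simpa using sq_natCast_div_hankelIndex_sub_le (d := 0) (by norm_num) n hs
          · exact rpow_le_one_of_one_le_of_nonpos (by exact_mod_cast hm) (by linarith)
      _ = C * (4 / (1 + x + y) ^ 2) := mul_one _
  have hmain : |B| * ((n : ℝ) / (m - d)) ^ 2 ≤ |B| * (4 / (1 + x + y) ^ 2) := by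
    gcongr
    exact sq_natCast_div_hankelIndex_sub_le hd n hs
  rw [stepKernel_eq Δ B d]
  calc _ ≤ |(n : ℝ) ^ 2 * (Δ m - B / ((m : ℝ) - d) ^ 2)| + |B * ((n : ℝ) / (m - d)) ^ 2|
        + |B / (1 + x + y) ^ 2| := (abs_sub _ _).trans (by gcongr; exact abs_add_le _ _)
    _ = (n : ℝ) ^ 2 * |Δ m - B / ((m : ℝ) - d) ^ 2| + |B| * ((n : ℝ) / (m - d)) ^ 2
        + |B| / (1 + x + y) ^ 2 := by simp only [abs_mul, abs_div, abs_sq]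
    _ ≤ C * (4 / (1 + x + y) ^ 2) + |B| * (4 / (1 + x + y) ^ 2) + |B| / (1 + x + y) ^ 2 := by
        gcongr
    _ = (4 * C + 5 * |B|) / (1 + x + y) ^ 2 := by ring

theorem tendsto_stepKernel {Δ : ℕ → ℝ} {B d C ε : ℝ} (hε : 0 < ε)
    (hΔ : ∀ m : ℕ, 1 ≤ m → |Δ m - B / ((m : ℝ) - d) ^ 2| ≤ C * (m : ℝ) ^ (-(2 + ε)))
    {x y : ℝ} (hx : 0 ≤ x) (hy : 0 ≤ y) :
    Tendsto (fun n => stepKernel Δ n x y) atTop (𝓝 (B / (1 + x + y) ^ 2)) := by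
  have hs : 0 < 1 + x + y := by linarith
  have hratio (d' : ℝ) :
      Tendsto (fun n : ℕ => (n : ℝ) / (hankelIndex n x y - d')) atTop (𝓝 (1 + x + y)⁻¹) := by
    simpa [inv_div] using (tendsto_hankelIndex_sub_div hx hy d').inv₀ hs.ne'
  have hindex : Tendsto (fun n : ℕ => (hankelIndex n x y : ℝ)) atTop atTop :=
    tendsto_natCast_atTop_atTop.comp <| tendsto_atTop_mono
      (fun n => (Nat.le_succ n).trans (succ_le_hankelIndex n x y)) tendsto_id
  have hrem : Tendsto (fun n : ℕ => (n : ℝ) ^ 2 *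
      (Δ (hankelIndex n x y) - B / (hankelIndex n x y - d) ^ 2)) atTop (𝓝 0) := by
    have hbound : Tendsto (fun n : ℕ => C * ((n : ℝ) / hankelIndex n x y) ^ 2 *
        (hankelIndex n x y : ℝ) ^ (-ε)) atTop (𝓝 0) := by
      simpa using (((hratio 0).pow 2).const_mul C).mul ((tendsto_rpow_neg_atTop hε).comp hindex)
    refine squeeze_zero_norm (fun n => ?_) hbound
    rw [norm_mul, Real.norm_eq_abs, Real.norm_eq_abs, abs_sq]
    exact sq_mul_abs_sub_le_rpow (one_le_hankelIndex n x y) (hΔ _ (one_le_hankelIndex n x y)) n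
  simp_rw [stepKernel_eq Δ B d]
  convert hrem.add ((hratio d).pow 2 |>.const_mul B) using 2
  rw [inv_pow, zero_add, div_eq_mul_inv]

theorem hankel_kernel_HS_convergence (B ε d : ℝ) (hε : 0 < ε)
    (hd : d ∈ Set.Ioo (0 : ℝ) (1/2))
    (Δ : ℕ → ℝ) (C : ℝ)
    (hΔ : ∀ m : ℕ, 1 ≤ m → |Δ m - B / ((m : ℝ) - d) ^ 2| ≤ C * (m : ℝ) ^ (-(2 + ε))) :
    Tendsto (fun n : ℕ =>
        ∫ x in Set.Ioi (0 : ℝ), ∫ y in Set.Ioi (0 : ℝ),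
          ((n : ℝ) ^ 2 * Δ (n + 1 + ⌊(n : ℝ) * x⌋₊ + ⌊(n : ℝ) * y⌋₊)
            - B / (1 + x + y) ^ 2) ^ 2)
      atTop (nhds 0) :=
  tendsto_integral_Ioi_Ioi_sq_of_abs_le (F := fun n x y => stepKernel Δ n x y - B / (1 + x + y) ^ 2)
    (fun n => (measurable_stepKernel Δ n).sub (by fun_prop))
    (fun n x y hx hy => abs_stepKernel_sub_le hε.le hd.2 hΔ n (by positivity))
    (fun x y hx hy => by
      rw [← sub_self (B / (1 + x + y) ^ 2)]
      exact (tendsto_stepKernel hε hΔ hx.le hy.le).sub_const _)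
end

section
/- Let d ∈ (0, 1/2) and set m := n - d. Let q : 𝕋 → ℂ be of class C^{2,2d} and 2π-periodic with q(0) = 1 and q'(0) = -iL for some L ∈ ℝ. Define g_+(θ) := e^{-iπd} q(θ) on [0, π] and g_-(θ) := e^{iπd} q(θ) on [-π, 0], and β_n := -(1/2π)(∫_{-π}^0 g_-(θ)e^{-imθ}dθ + ∫_0^π g_+(θ)e^{-imθ}dθ). Then β_n = sin(πd)/(π m) - L sin(πd)/(π m²) + O(m^{-2-2d}) as n → ∞. -/
open Real Complex

/-!
Write `m = n - d` and integrate by parts twice against `e^{-imθ}` on `[-π, 0]` and on `[0, π]`.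
Since `e^{∓imπ} = (-1)^n e^{±iπd}`, periodicity of `q` and `q'` makes the endpoint terms at `±π`
cancel, while at `0` the jump `e^{iπd} - e^{-iπd} = 2i sin(πd)` of the phase multiplies
`q(0)/c - q'(0)/c²` (`c = -im`), which produces the `m⁻¹` and `m⁻²` terms. What remains is `m⁻²`
times integrals of `q'' e^{-imθ}`. These are `O(m^{-2d})`: shifting by the half period `π/m` flips
the sign of `e^{-imθ}`, so twice such an integral is an integral of `q''(θ) - q''(θ - π/m)`, of
size `O(m^{-2d})` by Hölder continuity, plus two end pieces of length `π/m`.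
-/

theorem nonneg_of_norm_sub_le_mul_rpow {E : Type*} [SeminormedAddCommGroup E] {f : ℝ → E}
    {M α : ℝ} (hH : ∀ s t, ‖f t - f s‖ ≤ M * |t - s| ^ α) : 0 ≤ M := by
  simpa using (norm_nonneg _).trans (hH 0 1)

theorem Function.Periodic.deriv {𝕜 F : Type*} [NontriviallyNormedField 𝕜] [NormedAddCommGroup F]
    [NormedSpace 𝕜 F] {f : 𝕜 → F} {c : 𝕜} (h : Function.Periodic f c) :
    Function.Periodic (deriv f) c := fun x => by
  rw [← deriv_comp_add_const, show (fun y => f (y + c)) = f from funext h]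

theorem integral_mul_cexp_eq_of_contDiff_two {q : ℝ → ℂ} (hq : ContDiff ℝ 2 q) {c : ℂ}
    (hc : c ≠ 0) (a b : ℝ) :
    ∫ θ in a..b, q θ * cexp (c * θ) =
      (q b / c - deriv q b / c ^ 2) * cexp (c * b) - (q a / c - deriv q a / c ^ 2) * cexp (c * a)
        + (∫ θ in a..b, iteratedDeriv 2 q θ * cexp (c * θ)) / c ^ 2 := by
  have hq2 : iteratedDeriv 2 q = deriv (deriv q) := by
    rw [iteratedDeriv_succ, iteratedDeriv_one]
  have hdq : Differentiable ℝ q := hq.differentiable (by norm_num)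
  have hddq : Differentiable ℝ (deriv q) :=
    ((contDiff_succ_iff_deriv (n := 1)).mp hq).2.2.differentiable (by norm_num)
  have hantideriv (θ : ℝ) : HasDerivAt (fun t : ℝ => (q t / c - deriv q t / c ^ 2) * cexp (c * t))
      (q θ * cexp (c * θ) - iteratedDeriv 2 q θ * cexp (c * θ) / c ^ 2) θ := by
    have hexp : HasDerivAt (fun t : ℝ => cexp (c * t)) (cexp (c * θ) * c) θ :=
      ((hasDerivAt_id θ).ofReal_comp.const_mul c).cexp.congr_deriv (by simp)
    refine ((((hdq θ).hasDerivAt.div_const c).sub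
      ((hddq θ).hasDerivAt.div_const (c ^ 2))).mul hexp).congr_deriv ?_
    rw [hq2, Pi.sub_apply]
    field_simp
    ring
  have hcont : Continuous fun θ : ℝ => cexp (c * θ) := by fun_prop
  have hint (f : ℝ → ℂ) (hf : Continuous f) :
      IntervalIntegrable (fun θ => f θ * cexp (c * θ)) MeasureTheory.volume a b :=
    (hf.mul hcont).intervalIntegrable a b
  have hq2c : Continuous (iteratedDeriv 2 q) := hq.continuous_iteratedDeriv 2 le_rfl
  have hftc := intervalIntegral.integral_eq_sub_of_hasDerivAt (fun θ _ => hantideriv θ)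
    ((hint q hq.continuous).sub ((hint _ hq2c).div_const (c ^ 2)))
  rw [intervalIntegral.integral_sub (hint q hq.continuous) ((hint _ hq2c).div_const (c ^ 2)),
    intervalIntegral.integral_div] at hftc
  linear_combination hftc

theorem two_mul_integral_mul_of_antiperiodic {h e : ℝ → ℂ} (hh : Continuous h)
    (he : Continuous e) {δ : ℝ} (hδ : Function.Antiperiodic e δ) (a b : ℝ) :
    2 * ∫ θ in a..b, h θ * e θ =
      (∫ θ in a..a + δ, h θ * e θ) + (∫ θ in a + δ..b, (h θ - h (θ - δ)) * e θ)
        - ∫ θ in b..b + δ, h (θ - δ) * e θ := by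
  have hshift : ∫ θ in a..b, h θ * e θ = -∫ θ in a + δ..b + δ, h (θ - δ) * e θ := by
    rw [← intervalIntegral.integral_comp_add_right, ← intervalIntegral.integral_neg]
    simp only [add_sub_cancel_right, hδ _, mul_neg, neg_neg]
  have hf : ∀ u v, IntervalIntegrable (fun θ => h θ * e θ) MeasureTheory.volume u v :=
    fun u v => (hh.mul he).intervalIntegrable u v
  have hg : ∀ u v, IntervalIntegrable (fun θ => h (θ - δ) * e θ) MeasureTheory.volume u v :=
    fun u v => ((hh.comp (continuous_sub_right δ)).mul he).intervalIntegrable u v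
  have hsplit := intervalIntegral.integral_add_adjacent_intervals (hf a (a + δ)) (hf (a + δ) b)
  have hsplit' := intervalIntegral.integral_add_adjacent_intervals (hg (a + δ) b) (hg b (b + δ))
  have hdiff := intervalIntegral.integral_sub (hf (a + δ) b) (hg (a + δ) b)
  simp only [← sub_mul] at hdiff
  linear_combination hshift - hsplit + hsplit' - hdiff

theorem cexp_neg_I_mul_antiperiodic {m : ℝ} (hm : m ≠ 0) :
    Function.Antiperiodic (fun θ : ℝ => cexp (-I * m * θ)) (π / m) := by
  intro θ
  have : -I * m * ↑(θ + π / m) = -I * m * θ - π * I := by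
    have hm' : (m : ℂ) ≠ 0 := ofReal_ne_zero.mpr hm
    push_cast; field_simp; ring
  simp only [this, Complex.exp_sub, exp_pi_mul_I, div_neg, div_one]

theorem norm_cexp_neg_I_mul (m θ : ℝ) : ‖cexp (-I * m * θ)‖ = 1 := by
  simp [norm_exp]

theorem norm_integral_mul_cexp_le_of_holder {h : ℝ → ℂ} (hh : Continuous h) {M α B m a b : ℝ}
    (hH : ∀ s t, ‖h t - h s‖ ≤ M * |t - s| ^ α) (hB : ∀ θ ∈ Set.Icc a b, ‖h θ‖ ≤ B)
    (hm : 0 < m) (hab : π / m ≤ b - a) :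
    ‖∫ θ in a..b, h θ * cexp (-I * m * θ)‖ ≤ (b - a) / 2 * M * (π / m) ^ α + π / m * B := by
  set δ := π / m
  have hδ : 0 < δ := div_pos pi_pos hm
  have hM : 0 ≤ M := nonneg_of_norm_sub_le_mul_rpow hH
  have hnorm (f : ℝ → ℂ) (θ : ℝ) : ‖f θ * cexp (-I * m * θ)‖ = ‖f θ‖ := by
    rw [norm_mul, norm_cexp_neg_I_mul, mul_one]
  have hfirst : ‖∫ θ in a..a + δ, h θ * cexp (-I * m * θ)‖ ≤ B * δ := by
    refine (intervalIntegral.norm_integral_le_of_norm_le_const fun θ hθ => ?_).trans_eq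
      (by rw [add_sub_cancel_left, abs_of_pos hδ])
    rw [Set.uIoc_of_le (by linarith)] at hθ
    rw [hnorm]
    exact hB θ ⟨hθ.1.le, by linarith [hθ.2]⟩
  have hlast : ‖∫ θ in b..b + δ, h (θ - δ) * cexp (-I * m * θ)‖ ≤ B * δ := by
    refine (intervalIntegral.norm_integral_le_of_norm_le_const fun θ hθ => ?_).trans_eq
      (by rw [add_sub_cancel_left, abs_of_pos hδ])
    rw [Set.uIoc_of_le (by linarith)] at hθ
    rw [hnorm (fun θ => h (θ - δ))]
    exact hB (θ - δ) ⟨by linarith [hθ.1], by linarith [hθ.2]⟩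
  have hmiddle : ‖∫ θ in a + δ..b, (h θ - h (θ - δ)) * cexp (-I * m * θ)‖
      ≤ M * δ ^ α * (b - a - δ) := by
    refine (intervalIntegral.norm_integral_le_of_norm_le_const (C := M * δ ^ α)
      fun θ _ => ?_).trans_eq (by rw [abs_of_nonneg (by linarith)]; ring)
    rw [hnorm (fun θ => h θ - h (θ - δ))]
    simpa [abs_of_pos hδ] using hH (θ - δ) θ
  have htwice : 2 * ‖∫ θ in a..b, h θ * cexp (-I * m * θ)‖
      ≤ B * δ + M * δ ^ α * (b - a - δ) + B * δ := by
    rw [← Complex.norm_two, ← norm_mul, two_mul_integral_mul_of_antiperiodic hh (by fun_prop)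
      (cexp_neg_I_mul_antiperiodic hm.ne')]
    exact (norm_sub_le _ _).trans
      (add_le_add ((norm_add_le _ _).trans (add_le_add hfirst hmiddle)) hlast)
  nlinarith [mul_nonneg (mul_nonneg hM (rpow_nonneg hδ.le α)) hδ.le]

/-- `∫_{-π}^0 g_- e^{-imθ} + ∫_0^π g_+ e^{-imθ}` with `g_∓ = e^{±iπd} f`, so that
`β_n = -(2π)⁻¹ * phaseIntegral q d (n - d)`. -/
noncomputable def phaseIntegral (f : ℝ → ℂ) (d m : ℝ) : ℂ :=
  cexp (I * π * d) * (∫ θ in -π..0, f θ * cexp (-I * m * θ)) +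
    cexp (-I * π * d) * ∫ θ in 0..π, f θ * cexp (-I * m * θ)

/-- Both sides equal `(-1) ^ n`; this cancels the endpoint terms at `±π`. -/
theorem cexp_phase_mul_cexp_pi_eq (n : ℤ) (d : ℝ) :
    cexp (-I * π * d) * cexp (-I * ((n - d : ℝ) : ℂ) * π) =
      cexp (I * π * d) * cexp (-I * ((n - d : ℝ) : ℂ) * ((-π : ℝ) : ℂ)) := by
  rw [← Complex.exp_add, ← Complex.exp_add, Complex.exp_eq_exp_iff_exists_int]
  exact ⟨-n, by push_cast; ring⟩

theorem cexp_I_mul_sub_cexp_neg_I_mul (x y : ℝ) :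
    cexp (I * x * y) - cexp (-I * x * y) = 2 * I * Real.sin (x * y) := by
  rw [ofReal_sin, ofReal_mul, Complex.sin]
  ring_nf
  rw [I_sq]
  ring

theorem phaseIntegral_eq {q : ℝ → ℂ} (hq : ContDiff ℝ 2 q) (hper : Function.Periodic q (2 * π))
    (n : ℤ) (d : ℝ) (hm : (n : ℝ) - d ≠ 0) :
    phaseIntegral q d (n - d) =
      2 * Real.sin (π * d) * (I * deriv q 0 / ((n - d : ℝ) : ℂ) ^ 2 - q 0 / ((n - d : ℝ) : ℂ))
        - phaseIntegral (iteratedDeriv 2 q) d (n - d) / ((n - d : ℝ) : ℂ) ^ 2 := by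
  have hbd := cexp_phase_mul_cexp_pi_eq n d
  have hsin := cexp_I_mul_sub_cexp_neg_I_mul π d
  set m : ℝ := n - d
  have hm' : (m : ℂ) ≠ 0 := ofReal_ne_zero.mpr hm
  have hc : -I * m ≠ 0 := mul_ne_zero (neg_ne_zero.mpr I_ne_zero) hm'
  have hinv : (-I * m)⁻¹ = I * (m : ℂ)⁻¹ := by field_simp; exact I_sq.symm
  have hinv2 : ((-I * m) ^ 2)⁻¹ = -(m : ℂ)⁻¹ ^ 2 := by rw [← inv_pow, hinv, mul_pow, I_sq]; ring
  have hqπ : q π = q (-π) := by simpa [two_mul] using hper (-π)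
  have hq'π : deriv q π = deriv q (-π) := by simpa [two_mul] using hper.deriv (-π)
  unfold phaseIntegral
  rw [integral_mul_cexp_eq_of_contDiff_two hq hc, integral_mul_cexp_eq_of_contDiff_two hq hc,
    hqπ, hq'π]
  simp only [ofReal_zero, mul_zero, Complex.exp_zero, mul_one, div_eq_mul_inv, hinv, hinv2]
  linear_combination (q 0 * (I * (m : ℂ)⁻¹) + deriv q 0 * (m : ℂ)⁻¹ ^ 2) * hsin
    + (q (-π) * (I * (m : ℂ)⁻¹) + deriv q (-π) * (m : ℂ)⁻¹ ^ 2) * hbd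
    + 2 * Real.sin (π * d) * q 0 * (m : ℂ)⁻¹ * I_sq

theorem neg_div_two_pi_mul_phaseIntegral_sub_eq {q : ℝ → ℂ} (hq : ContDiff ℝ 2 q)
    (hper : Function.Periodic q (2 * π)) {L : ℝ} (hq0 : q 0 = 1) (hq'0 : deriv q 0 = -I * L)
    (n : ℕ) (d : ℝ) (hm : (n : ℝ) - d ≠ 0) :
    -(1 / (2 * π)) * phaseIntegral q d (n - d) - ((Real.sin (π * d) / (π * ((n : ℝ) - d)) : ℝ) -
        (L * Real.sin (π * d) / (π * ((n : ℝ) - d) ^ 2) : ℝ))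
      = phaseIntegral (iteratedDeriv 2 q) d (n - d) / ((2 * π * ((n : ℝ) - d) ^ 2 : ℝ) : ℂ) := by
  have h := phaseIntegral_eq hq hper n d (by push_cast; exact hm)
  push_cast at h ⊢
  rw [h, hq0, hq'0, show I * (-I * L) = L by rw [← mul_assoc, mul_neg, I_mul_I, neg_neg, one_mul]]
  have hm' : (n : ℂ) - d ≠ 0 := by exact_mod_cast hm
  have hπ : (π : ℂ) ≠ 0 := ofReal_ne_zero.mpr pi_ne_zero
  field_simp
  ring

theorem norm_phaseIntegral_le_of_holder {f : ℝ → ℂ} (hf : Continuous f) {M α : ℝ} (hα : 0 ≤ α)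
    (hH : ∀ s t, ‖f t - f s‖ ≤ M * |t - s| ^ α) (d : ℝ) {m : ℝ} (hm : 1 ≤ m) :
    ‖phaseIntegral f d m‖ ≤ π * M * (π / m) ^ α + 2 * π / m * (‖f 0‖ + M * π ^ α) := by
  have hbound : ∀ θ ∈ Set.Icc (-π) π, ‖f θ‖ ≤ ‖f 0‖ + M * π ^ α := fun θ hθ => by
    have hθ' : |θ - 0| ≤ π := by rw [sub_zero, abs_le]; exact hθ
    calc ‖f θ‖ ≤ ‖f 0‖ + ‖f θ - f 0‖ := norm_le_insert' _ _
      _ ≤ ‖f 0‖ + M * π ^ α := by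
        gcongr
        exact (hH 0 θ).trans (by gcongr; exact nonneg_of_norm_sub_le_mul_rpow hH)
  have hm0 : 0 < m := one_pos.trans_le hm
  have hδ : π / m ≤ π := div_le_self pi_pos.le hm
  have hneg := norm_integral_mul_cexp_le_of_holder (a := -π) (b := 0) hf hH
    (fun θ hθ => hbound θ ⟨hθ.1, hθ.2.trans pi_pos.le⟩) hm0 (by linarith)
  have hpos := norm_integral_mul_cexp_le_of_holder (a := 0) (b := π) hf hH
    (fun θ hθ => hbound θ ⟨by linarith [hθ.1, pi_pos], hθ.2⟩) hm0 (by linarith)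
  have hunit (x : ℂ) (hx : x.re = 0) : ‖cexp (x * π * d)‖ = 1 := by simp [norm_exp, hx]
  unfold phaseIntegral
  refine (norm_add_le _ _).trans ?_
  rw [norm_mul, norm_mul, hunit I I_re, hunit (-I) (by simp), one_mul, one_mul]
  exact (add_le_add hneg hpos).trans_eq (by ring)

theorem div_two_pi_mul_sq_le_mul_rpow {M B α m : ℝ} (hB : 0 ≤ B) (hα : α ≤ 1) (hm : 1 ≤ m) :
    (π * M * (π / m) ^ α + 2 * π / m * B) / (2 * π * m ^ 2)
      ≤ (π ^ α * M / 2 + B) * m ^ (-(2 + α)) := by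
  have hm0 : 0 < m := one_pos.trans_le hm
  have hsplit : m ^ (-(2 + α)) = m ^ (-α) / m ^ 2 := by
    rw [neg_add, rpow_add hm0, rpow_neg hm0.le 2, rpow_two]; ring
  have hinv : m⁻¹ ≤ m ^ (-α) := by
    rw [← rpow_neg_one]; exact rpow_le_rpow_of_exponent_le hm (by linarith)
  calc (π * M * (π / m) ^ α + 2 * π / m * B) / (2 * π * m ^ 2)
      = π ^ α * M / 2 * (m ^ (-α) / m ^ 2) + B * (m⁻¹ / m ^ 2) := by
        rw [div_rpow pi_pos.le hm0.le, rpow_neg hm0.le]; field_simp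
    _ ≤ π ^ α * M / 2 * (m ^ (-α) / m ^ 2) + B * (m ^ (-α) / m ^ 2) := by gcongr
    _ = (π ^ α * M / 2 + B) * m ^ (-(2 + α)) := by rw [hsplit]; ring

theorem phase_coefficient_expansion (d L : ℝ) (hd : d ∈ Set.Ioo (0 : ℝ) (1/2))
    (q : ℝ → ℂ) (M : ℝ)
    (hper : Function.Periodic q (2 * π))
    (hC2 : ContDiff ℝ 2 q)
    (hHol : ∀ s t : ℝ, ‖iteratedDeriv 2 q t - iteratedDeriv 2 q s‖ ≤ M * |t - s| ^ (2 * d))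
    (hq0 : q 0 = 1)
    (hq'0 : deriv q 0 = -Complex.I * L)
    (β : ℕ → ℂ)
    (hβ : ∀ n : ℕ, β n = -(1 / (2 * π)) *
        ((∫ θ in (-π : ℝ)..0, Complex.exp (Complex.I * π * d) * q θ *
            Complex.exp (-Complex.I * ((n : ℝ) - d) * θ)) +
         (∫ θ in (0 : ℝ)..π, Complex.exp (-Complex.I * π * d) * q θ *
            Complex.exp (-Complex.I * ((n : ℝ) - d) * θ)))) :
    ∃ C : ℝ, ∃ N : ℕ, ∀ n : ℕ, N ≤ n →
      ‖β n - ((Real.sin (π * d) / (π * ((n : ℝ) - d)) : ℝ) -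
          (L * Real.sin (π * d) / (π * ((n : ℝ) - d) ^ 2) : ℝ))‖
        ≤ C * ((n : ℝ) - d) ^ (-(2 + 2 * d)) := by
  obtain ⟨hd0, hd1⟩ := hd
  set B := ‖iteratedDeriv 2 q 0‖ + M * π ^ (2 * d)
  have hB : 0 ≤ B := by have := nonneg_of_norm_sub_le_mul_rpow hHol; positivity
  refine ⟨π ^ (2 * d) * M / 2 + B, 2, fun n hn => ?_⟩
  have hm : 1 ≤ (n : ℝ) - d := by
    have : (2 : ℝ) ≤ n := by exact_mod_cast hn
    linarith
  have hP : β n = -(1 / (2 * π)) * phaseIntegral q d (n - d) := by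
    rw [hβ n, phaseIntegral]
    push_cast
    simp only [mul_assoc, intervalIntegral.integral_const_mul]
  rw [hP, neg_div_two_pi_mul_phaseIntegral_sub_eq hC2 hper hq0 hq'0 n d (by linarith), norm_div,
    norm_real, Real.norm_of_nonneg (by positivity)]
  calc _ ≤ (π * M * (π / (n - d)) ^ (2 * d) + 2 * π / (n - d) * B)
        / (2 * π * ((n : ℝ) - d) ^ 2) := by
        gcongr
        exact norm_phaseIntegral_le_of_holder (hC2.continuous_iteratedDeriv 2 le_rfl)
          (by positivity) hHol d hm
    _ ≤ _ := div_two_pi_mul_sq_le_mul_rpow hB (by linarith) hm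
end

section
/- Let (β_m^F) and (β_m^G) be sequences satisfying 0 ≤ β_m^G ≤ β_m^F for all m ≥ n, with both Hankel operators H_n(β^F), H_n(β^G) (entries β_{n+1+i+j}) bounded on ℓ²(ℕ) with norm < 1. Define α(β)(n) := β_n + ⟨p_n(β), H_n(β)(I - H_n(β)²)^{-1} q_n(β)⟩ where (p_n(β))_i = β_{n+i}, (q_n(β))_i = β_{n+1+i}. Then α(β^F)(n) - α(β^G)(n) ≥ β_n^F - β_n^G. -/
/-!
Expanding `(1 - T²)⁻¹` as a Neumann series turns the correction term `⟪p, T (1 - T²)⁻¹ q⟫` into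
`∑ₖ ⟪p, T^(2k+1) q⟫`. The entries of `p`, `q` and of the Hankel matrix `T` are all `β_m` with
`m ≥ n`, and each term of the series is a nested sum of products of such entries, hence monotone
in them on the nonnegative cone: the series for `β^F` dominates the one for `β^G` termwise.
-/

open scoped RealInnerProductSpace lp

section InfiniteMatrix

variable {ι : Type*}

def HasMatrix (T : ℓ²(ι, ℝ) →L[ℝ] ℓ²(ι, ℝ)) (K : ι → ι → ℝ) : Prop :=
  ∀ (a : ℓ²(ι, ℝ)) (i : ι), T a i = ∑' j, K i j * a j

variable {T TF TG : ℓ²(ι, ℝ) →L[ℝ] ℓ²(ι, ℝ)} {K KF KG : ι → ι → ℝ}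

lemma HasMatrix.apply_single [DecidableEq ι] (hT : HasMatrix T K) (i j : ι) :
    T (lp.single 2 j 1) i = K i j := by
  rw [hT, tsum_eq_single j fun k hk => by rw [lp.single_apply_ne 2 j 1 hk, mul_zero],
    lp.single_apply_self, mul_one]

/-- Row `i` of `K` is the vector `T† eᵢ`, hence square-summable. -/
lemma HasMatrix.summable_mul (hT : HasMatrix T K) (a : ℓ²(ι, ℝ)) (i : ι) :
    Summable fun j => K i j * a j := by
  classical
  have hcoord (k : ι) (f : ℓ²(ι, ℝ)) : ⟪lp.single 2 k 1, f⟫ = f k := by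
    rw [lp.inner_single_left, Real.inner_apply, one_mul]
  have hrow (j : ι) : K i j = T.adjoint (lp.single 2 i 1) j := by
    rw [← hT.apply_single, ← hcoord, ← T.adjoint_inner_left, real_inner_comm, hcoord]
  simpa only [hrow, Real.inner_apply, mul_comm] using
    lp.summable_inner (𝕜 := ℝ) (T.adjoint (lp.single 2 i 1)) a

lemma HasMatrix.apply_mono (hF : HasMatrix TF KF) (hG : HasMatrix TG KG)
    (hKG : ∀ i j, 0 ≤ KG i j) (hK : ∀ i j, KG i j ≤ KF i j) {a b : ℓ²(ι, ℝ)}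
    (ha : ∀ j, 0 ≤ a j) (hab : ∀ j, a j ≤ b j) (i : ι) :
    0 ≤ TG a i ∧ TG a i ≤ TF b i := by
  have hterm (j : ι) : KG i j * a j ≤ KF i j * b j :=
    mul_le_mul (hK i j) (hab j) (ha j) ((hKG i j).trans (hK i j))
  rw [hG, hF]
  exact ⟨tsum_nonneg fun j => mul_nonneg (hKG i j) (ha j),
    (hG.summable_mul a i).tsum_le_tsum hterm (hF.summable_mul b i)⟩

lemma HasMatrix.pow_apply_mono (hF : HasMatrix TF KF) (hG : HasMatrix TG KG)
    (hKG : ∀ i j, 0 ≤ KG i j) (hK : ∀ i j, KG i j ≤ KF i j) {a b : ℓ²(ι, ℝ)}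
    (ha : ∀ j, 0 ≤ a j) (hab : ∀ j, a j ≤ b j) (m : ℕ) (i : ι) :
    0 ≤ (TG ^ m) a i ∧ (TG ^ m) a i ≤ (TF ^ m) b i := by
  induction m generalizing i with
  | zero => exact ⟨ha i, hab i⟩
  | succ m ih =>
    rw [pow_succ', pow_succ']
    exact hF.apply_mono hG hKG hK (fun j => (ih j).1) (fun j => (ih j).2) i

lemma lp.real_inner_le_inner_of_nonneg {p p' x x' : ℓ²(ι, ℝ)} (hp : ∀ i, 0 ≤ p i)
    (hpp' : ∀ i, p i ≤ p' i) (hx : ∀ i, 0 ≤ x i) (hxx' : ∀ i, x i ≤ x' i) : ⟪p, x⟫ ≤ ⟪p', x'⟫ :=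
  hasSum_le (fun i => by
      simp only [Real.inner_apply]
      exact mul_le_mul (hpp' i) (hxx' i) (hx i) ((hp i).trans (hpp' i)))
    (lp.hasSum_inner p x) (lp.hasSum_inner p' x')

end InfiniteMatrix

lemma hasSum_odd_pow_of_norm_lt_one {R : Type*} [NormedRing R] [HasSummableGeomSeries R]
    {T : R} (hT : ‖T‖ < 1) :
    HasSum (fun k : ℕ => T ^ (2 * k + 1)) (T * Ring.inverse (1 - T * T)) := by
  have hTT : ‖T * T‖ < 1 :=
    (norm_mul_le T T).trans_lt (mul_lt_one_of_nonneg_of_lt_one_left (norm_nonneg T) hT hT.le)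
  have hodd (k : ℕ) : T ^ (2 * k + 1) = T * (T * T) ^ k := by rw [pow_succ', pow_mul, sq]
  simp only [hodd]
  exact (hasSum_geom_series_inverse (T * T) hTT).mul_left T

lemma hasSum_inner_odd_pow_of_norm_lt_one {E : Type*} [NormedAddCommGroup E]
    [InnerProductSpace ℝ E] [CompleteSpace E] {T : E →L[ℝ] E} (hT : ‖T‖ < 1) (p q : E) :
    HasSum (fun k : ℕ => ⟪p, (T ^ (2 * k + 1)) q⟫) ⟪p, (T * Ring.inverse (1 - T * T)) q⟫ :=
  (hasSum_odd_pow_of_norm_lt_one hT).mapL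
    ((innerSL ℝ p).comp (ContinuousLinearMap.apply ℝ E q))

theorem BIK_pacf_monotone_comparison_general
    (βF βG : ℕ → ℝ) (n : ℕ)
    (hmono : ∀ m : ℕ, n ≤ m → 0 ≤ βG m ∧ βG m ≤ βF m)
    (TF TG : lp (fun _ : ℕ => ℝ) 2 →L[ℝ] lp (fun _ : ℕ => ℝ) 2)
    (hTF : ∀ (a : lp (fun _ : ℕ => ℝ) 2) (i : ℕ),
      (TF a : ∀ _ : ℕ, ℝ) i = ∑' j : ℕ, βF (n + 1 + i + j) * (a : ∀ _ : ℕ, ℝ) j)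
    (hTG : ∀ (a : lp (fun _ : ℕ => ℝ) 2) (i : ℕ),
      (TG a : ∀ _ : ℕ, ℝ) i = ∑' j : ℕ, βG (n + 1 + i + j) * (a : ∀ _ : ℕ, ℝ) j)
    (hTFnorm : ‖TF‖ < 1) (hTGnorm : ‖TG‖ < 1)
    (pF qF pG qG : lp (fun _ : ℕ => ℝ) 2)
    (hpF : ∀ i : ℕ, (pF : ∀ _ : ℕ, ℝ) i = βF (n + i))
    (hqF : ∀ i : ℕ, (qF : ∀ _ : ℕ, ℝ) i = βF (n + 1 + i))
    (hpG : ∀ i : ℕ, (pG : ∀ _ : ℕ, ℝ) i = βG (n + i))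
    (hqG : ∀ i : ℕ, (qG : ∀ _ : ℕ, ℝ) i = βG (n + 1 + i)) :
    (βF n + (inner ℝ pF ((TF * Ring.inverse (1 - TF * TF)) qF) : ℝ)) -
      (βG n + (inner ℝ pG ((TG * Ring.inverse (1 - TG * TG)) qG) : ℝ))
      ≥ βF n - βG n := by
  have hβ (k : ℕ) : 0 ≤ βG (n + k) ∧ βG (n + k) ≤ βF (n + k) := hmono _ (Nat.le_add_right n k)
  have hpow (m i : ℕ) : 0 ≤ (TG ^ m) qG i ∧ (TG ^ m) qG i ≤ (TF ^ m) qF i :=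
    HasMatrix.pow_apply_mono (KF := fun i j => βF (n + 1 + i + j))
      (KG := fun i j => βG (n + 1 + i + j)) hTF hTG
      (fun i j => by simpa only [add_assoc] using (hβ (1 + i + j)).1)
      (fun i j => by simpa only [add_assoc] using (hβ (1 + i + j)).2)
      (fun i => by simpa only [hqG, add_assoc] using (hβ (1 + i)).1)
      (fun i => by simpa only [hqF, hqG, add_assoc] using (hβ (1 + i)).2) m i
  have hterm (k : ℕ) : ⟪pG, (TG ^ (2 * k + 1)) qG⟫ ≤ ⟪pF, (TF ^ (2 * k + 1)) qF⟫ :=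
    lp.real_inner_le_inner_of_nonneg (fun i => by simpa only [hpG] using (hβ i).1)
      (fun i => by simpa only [hpF, hpG] using (hβ i).2) (fun i => (hpow _ i).1)
      (fun i => (hpow _ i).2)
  have hinner := hasSum_le hterm (hasSum_inner_odd_pow_of_norm_lt_one hTGnorm pG qG)
    (hasSum_inner_odd_pow_of_norm_lt_one hTFnorm pF qF)
  linarith

theorem BIK_pacf_monotone_comparison
    (βF βG : ℕ → ℝ) (n : ℕ) (hn : 1 ≤ n)
    (hmono : ∀ m : ℕ, n ≤ m → 0 ≤ βG m ∧ βG m ≤ βF m)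
    (TF TG : lp (fun _ : ℕ => ℝ) 2 →L[ℝ] lp (fun _ : ℕ => ℝ) 2)
    (hTF : ∀ (a : lp (fun _ : ℕ => ℝ) 2) (i : ℕ),
      (TF a : ∀ _ : ℕ, ℝ) i = ∑' j : ℕ, βF (n + 1 + i + j) * (a : ∀ _ : ℕ, ℝ) j)
    (hTG : ∀ (a : lp (fun _ : ℕ => ℝ) 2) (i : ℕ),
      (TG a : ∀ _ : ℕ, ℝ) i = ∑' j : ℕ, βG (n + 1 + i + j) * (a : ∀ _ : ℕ, ℝ) j)
    (hTFnorm : ‖TF‖ < 1) (hTGnorm : ‖TG‖ < 1)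
    (pF qF pG qG : lp (fun _ : ℕ => ℝ) 2)
    (hpF : ∀ i : ℕ, (pF : ∀ _ : ℕ, ℝ) i = βF (n + i))
    (hqF : ∀ i : ℕ, (qF : ∀ _ : ℕ, ℝ) i = βF (n + 1 + i))
    (hpG : ∀ i : ℕ, (pG : ∀ _ : ℕ, ℝ) i = βG (n + i))
    (hqG : ∀ i : ℕ, (qG : ∀ _ : ℕ, ℝ) i = βG (n + 1 + i)) :
    (βF n + (inner ℝ pF ((TF * Ring.inverse (1 - TF * TF)) qF) : ℝ)) -
      (βG n + (inner ℝ pG ((TG * Ring.inverse (1 - TG * TG)) qG) : ℝ))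
      ≥ βF n - βG n :=
  BIK_pacf_monotone_comparison_general βF βG n hmono TF TG hTF hTG hTFnorm hTGnorm pF qF pG qG hpF
    hqF hpG hqG
end
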